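/- In ℂ² ⊗ ℂ² ⊗ ℂ², the vectors ψ₁ = |000⟩ + |111⟩, ψ₂ = |001⟩ + |010⟩ + 2|100⟩, ψ₃ = |011⟩ + |101⟩ − |110⟩ are linearly independent and their span is a three-dimensional genuinely entangled subspace. -/

import Mathlib

noncomputable section

abbrev TriH (d₁ d₂ d₃ : ℕ) := EuclideanSpace ℂ (Fin d₁ × Fin d₂ × Fin d₃)

def BiprodA {d₁ d₂ d₃ : ℕ} (ψ : TriH d₁ d₂ d₃) : Prop :=
  ∃ (a : Fin d₁ → ℂ) (g : Fin d₂ × Fin d₃ → ℂ), ∀ i j k, ψ (i, j, k) = a i * g (j, k)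

def BiprodB {d₁ d₂ d₃ : ℕ} (ψ : TriH d₁ d₂ d₃) : Prop :=
  ∃ (b : Fin d₂ → ℂ) (g : Fin d₁ × Fin d₃ → ℂ), ∀ i j k, ψ (i, j, k) = b j * g (i, k)

def BiprodC {d₁ d₂ d₃ : ℕ} (ψ : TriH d₁ d₂ d₃) : Prop :=
  ∃ (c : Fin d₃ → ℂ) (g : Fin d₁ × Fin d₂ → ℂ), ∀ i j k, ψ (i, j, k) = c k * g (i, j)

def IsGME3 {d₁ d₂ d₃ : ℕ} (ψ : TriH d₁ d₂ d₃) : Prop :=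
  ψ ≠ 0 ∧ ¬ BiprodA ψ ∧ ¬ BiprodB ψ ∧ ¬ BiprodC ψ

def IsGES3 {d₁ d₂ d₃ : ℕ} (V : Submodule ℂ (TriH d₁ d₂ d₃)) : Prop :=
  ∀ ψ ∈ V, ψ ≠ 0 → IsGME3 ψ

def ket (i j k : Fin 2) : TriH 2 2 2 := WithLp.toLp 2 (fun p => if p = (i, j, k) then (1 : ℂ) else 0)

/-!
A vector that is biproduct across a cut has a rank-one flattening, so its 2 × 2 minors across that cut
vanish. The span is the family `x ψ₁ + y ψ₂ + z ψ₃`, whose coefficient tensor is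
`[[[x, y], [y, z]], [[2y, z], [-z, x]]]`; for each of the three cuts, two minors give `y² = 0`, and then two
more give `x² = 0` and `z² = 0`.
-/

section Biproduct

variable {d₁ d₂ d₃ : ℕ} {ψ : TriH d₁ d₂ d₃}

theorem BiprodA.mul_eq_mul (h : BiprodA ψ) (i i' : Fin d₁) (j j' : Fin d₂) (k k' : Fin d₃) :
    ψ (i, j, k) * ψ (i', j', k') = ψ (i', j, k) * ψ (i, j', k') := by
  obtain ⟨a, g, hψ⟩ := h
  simp only [hψ]
  ring

theorem BiprodB.mul_eq_mul (h : BiprodB ψ) (i i' : Fin d₁) (j j' : Fin d₂) (k k' : Fin d₃) :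
    ψ (i, j, k) * ψ (i', j', k') = ψ (i, j', k) * ψ (i', j, k') := by
  obtain ⟨b, g, hψ⟩ := h
  simp only [hψ]
  ring

theorem BiprodC.mul_eq_mul (h : BiprodC ψ) (i i' : Fin d₁) (j j' : Fin d₂) (k k' : Fin d₃) :
    ψ (i, j, k) * ψ (i', j', k') = ψ (i, j, k') * ψ (i', j', k) := by
  obtain ⟨c, g, hψ⟩ := h
  simp only [hψ]
  ring

end Biproduct

local notation "ψ₁" => ket 0 0 0 + ket 1 1 1
local notation "ψ₂" => ket 0 0 1 + ket 0 1 0 + (2 : ℂ) • ket 1 0 0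
local notation "ψ₃" => ket 0 1 1 + ket 1 0 1 - ket 1 1 0

namespace ThreeQubits

variable {x y z : ℂ}

theorem combination_apply (x y z : ℂ) (p : Fin 2 × Fin 2 × Fin 2) :
    (x • ψ₁ + y • ψ₂ + z • ψ₃) p =
      ![![![x, y], ![y, z]], ![![2 * y, z], ![-z, x]]] p.1 p.2.1 p.2.2 := by
  obtain ⟨i, j, k⟩ := p
  fin_cases i <;> fin_cases j <;> fin_cases k <;> norm_num [ket, Prod.ext_iff, mul_comm]

theorem combination_eq_zero (h : x • ψ₁ + y • ψ₂ + z • ψ₃ = 0) : x = 0 ∧ y = 0 ∧ z = 0 := by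
  have h000 := congrArg (· (0, 0, 0)) h
  have h001 := congrArg (· (0, 0, 1)) h
  have h011 := congrArg (· (0, 1, 1)) h
  simp only [combination_apply] at h000 h001 h011
  exact ⟨h000, h001, h011⟩

theorem combination_eq_zero_of_biprodA (h : BiprodA (x • ψ₁ + y • ψ₂ + z • ψ₃)) :
    x = 0 ∧ y = 0 ∧ z = 0 := by
  have m1 := h.mul_eq_mul 0 1 0 0 0 1
  have m2 := h.mul_eq_mul 0 1 0 1 0 0
  have m3 := h.mul_eq_mul 0 1 0 1 0 1
  have m4 := h.mul_eq_mul 0 1 0 1 1 1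
  simp only [combination_apply, Matrix.cons_val_zero, Matrix.cons_val_one, Matrix.cons_val_fin_one,
    mul_neg] at m1 m2 m3 m4
  have hy : y = 0 := mul_self_eq_zero.mp (by linear_combination -(m1 + m2) / 4)
  subst hy
  exact ⟨mul_self_eq_zero.mp (by linear_combination m3), rfl,
    mul_self_eq_zero.mp (by linear_combination -m4)⟩

theorem combination_eq_zero_of_biprodB (h : BiprodB (x • ψ₁ + y • ψ₂ + z • ψ₃)) :
    x = 0 ∧ y = 0 ∧ z = 0 := by
  have m1 := h.mul_eq_mul 0 0 0 1 0 1
  have m2 := h.mul_eq_mul 0 1 0 1 0 0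
  have m3 := h.mul_eq_mul 0 1 0 1 0 1
  have m4 := h.mul_eq_mul 0 1 0 1 1 1
  simp only [combination_apply, Matrix.cons_val_zero, Matrix.cons_val_one, Matrix.cons_val_fin_one,
    mul_neg] at m1 m2 m3 m4
  have hy : y = 0 := mul_self_eq_zero.mp (by linear_combination -(m1 + m2) / 3)
  subst hy
  exact ⟨mul_self_eq_zero.mp (by linear_combination m3), rfl,
    mul_self_eq_zero.mp (by linear_combination -m4)⟩

theorem combination_eq_zero_of_biprodC (h : BiprodC (x • ψ₁ + y • ψ₂ + z • ψ₃)) :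
    x = 0 ∧ y = 0 ∧ z = 0 := by
  have m1 := h.mul_eq_mul 0 0 0 1 0 1
  have m2 := h.mul_eq_mul 0 1 0 0 0 1
  have m3 := h.mul_eq_mul 0 1 0 1 0 1
  have m4 := h.mul_eq_mul 0 1 1 1 0 1
  simp only [combination_apply, Matrix.cons_val_zero, Matrix.cons_val_one, Matrix.cons_val_fin_one,
    mul_neg] at m1 m2 m3 m4
  have hy : y = 0 := mul_self_eq_zero.mp (by linear_combination m1 - m2)
  subst hy
  exact ⟨mul_self_eq_zero.mp (by linear_combination m3), rfl,
    mul_self_eq_zero.mp (by linear_combination m4)⟩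

theorem sum_smul_family (c : Fin 3 → ℂ) :
    ∑ i, c i • ![ψ₁, ψ₂, ψ₃] i = c 0 • ψ₁ + c 1 • ψ₂ + c 2 • ψ₃ := by
  simp only [Fin.sum_univ_three, Matrix.cons_val_zero, Matrix.cons_val_one, Matrix.cons_val_two,
    Matrix.head_cons, Matrix.tail_cons]

theorem linearIndependent_family : LinearIndependent ℂ ![ψ₁, ψ₂, ψ₃] := by
  rw [Fintype.linearIndependent_iff]
  intro c hc
  obtain ⟨h0, h1, h2⟩ := combination_eq_zero (by rwa [sum_smul_family] at hc)
  intro i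
  fin_cases i
  exacts [h0, h1, h2]

theorem isGME3_combination (h : x • ψ₁ + y • ψ₂ + z • ψ₃ ≠ 0) :
    IsGME3 (x • ψ₁ + y • ψ₂ + z • ψ₃) := by
  have coeffs_ne : ¬(x = 0 ∧ y = 0 ∧ z = 0) := by
    rintro ⟨rfl, rfl, rfl⟩
    simp at h
  exact ⟨h, fun hA ↦ coeffs_ne (combination_eq_zero_of_biprodA hA),
    fun hB ↦ coeffs_ne (combination_eq_zero_of_biprodB hB),
    fun hC ↦ coeffs_ne (combination_eq_zero_of_biprodC hC)⟩

end ThreeQubits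

open ThreeQubits

/-- `ψ₁ = |000⟩ + |111⟩`, `ψ₂ = |001⟩ + |010⟩ + 2|100⟩`,
`ψ₃ = |011⟩ + |101⟩ − |110⟩` are linearly independent and span a three-dimensional
GES of `ℂ²⊗ℂ²⊗ℂ²`. -/
theorem GES2_three_qubits :
    LinearIndependent ℂ
      ![ket 0 0 0 + ket 1 1 1,
        ket 0 0 1 + ket 0 1 0 + (2 : ℂ) • ket 1 0 0,
        ket 0 1 1 + ket 1 0 1 - ket 1 1 0] ∧
    Module.finrank ℂ (Submodule.span ℂ
      {ket 0 0 0 + ket 1 1 1,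
       ket 0 0 1 + ket 0 1 0 + (2 : ℂ) • ket 1 0 0,
       ket 0 1 1 + ket 1 0 1 - ket 1 1 0}) = 3 ∧
    IsGES3 (Submodule.span ℂ
      {ket 0 0 0 + ket 1 1 1,
       ket 0 0 1 + ket 0 1 0 + (2 : ℂ) • ket 1 0 0,
       ket 0 1 1 + ket 1 0 1 - ket 1 1 0}) := by
  have hspan : ({ψ₁, ψ₂, ψ₃} : Set (TriH 2 2 2)) = Set.range ![ψ₁, ψ₂, ψ₃] := by
    rw [Matrix.range_cons, Matrix.range_cons, Matrix.range_cons_empty, Set.singleton_union,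
      Set.singleton_union]
  refine ⟨linearIndependent_family, ?_, ?_⟩
  · rw [hspan, finrank_span_eq_card linearIndependent_family, Fintype.card_fin]
  · rintro ψ hψ hne
    rw [hspan, Submodule.mem_span_range_iff_exists_fun] at hψ
    obtain ⟨c, rfl⟩ := hψ
    rw [sum_smul_family] at hne ⊢
    exact isGME3_combination hne
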